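/- arXiv:2508.01755 — 6 statements merged into one kernel-verified Lean document; each statement's English description precedes it below -/
import Mathlib

section
/- Under the same hypotheses, with M_b := max{b₀, max{w₀, R/a}}, any solution satisfies b(t) ≤ M_b and w(t) ≥ min{w₀, R/(a + δ M_b)} > 0 for all t ≥ 0 in its interval of existence; in particular solutions are uniformly bounded and bounded away from w = 0. -/
/-!
Comparison with constant barriers. Since `R ≤ a W` for `W := max w₀ (R/a)`, the `w`-equation
pushes `w` down wherever `w > W`; so `w ≤ W`. Then wherever `b > M_b ≥ W ≥ w`, the logistic
term `ρ b (1 - b/w)` is negative and `b` decreases; so `b ≤ M_b`. Finally `b ≤ M_b` gives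
`w' ≥ R - (a + δ M_b) w`, which is positive wherever `w < R/(a + δ M_b)`.
-/

open Set

lemma image_le_of_hasDerivAt_neg_above {f f' : ℝ → ℝ} {a b K : ℝ}
    (hf : ∀ t ∈ Icc a b, HasDerivAt f (f' t) t) (ha : f a ≤ K)
    (hneg : ∀ x ∈ Ico a b, K < f x → f' x < 0) :
    ∀ t ∈ Icc a b, f t ≤ K := by
  intro t ht
  refine le_of_forall_gt_imp_ge_of_dense fun K' hK' => ?_
  exact image_le_of_deriv_right_lt_deriv_boundary
    (fun x hx => (hf x hx).continuousAt.continuousWithinAt)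
    (fun x hx => (hf x (Ico_subset_Icc_self hx)).hasDerivWithinAt)
    (ha.trans hK'.le) (fun _ => hasDerivAt_const _ K')
    (fun x hx hfx => hneg x hx (hfx ▸ hK')) ht

lemma le_image_of_hasDerivAt_pos_below {f f' : ℝ → ℝ} {a b K : ℝ}
    (hf : ∀ t ∈ Icc a b, HasDerivAt f (f' t) t) (ha : K ≤ f a)
    (hpos : ∀ x ∈ Ico a b, f x < K → 0 < f' x) :
    ∀ t ∈ Icc a b, K ≤ f t := by
  have := image_le_of_hasDerivAt_neg_above (f := -f) (f' := -f') (K := -K)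
    (fun t ht => (hf t ht).neg) (neg_le_neg ha)
    (fun x hx hx' => neg_neg_of_pos (hpos x hx (lt_of_neg_lt_neg hx')))
  exact fun t ht => le_of_neg_le_neg (this t ht)

theorem stmt_2_general (R a δ ρ μ θ₁ θ₂ : ℝ)
    (hR : 0 < R) (ha : 0 < a) (hδ : 0 < δ) (hρ : 0 < ρ) (hμ : 0 < μ)
    (hθ₁ : 0 < θ₁) (hθ₂ : 0 < θ₂)
    (T : ℝ) (w b : ℝ → ℝ) (w₀ b₀ : ℝ)
    (hw₀ : 0 < w₀) (hw0 : w 0 = w₀) (hb0 : b 0 = b₀)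
    (hwpos : ∀ t ∈ Set.Icc (0:ℝ) T, 0 < w t)
    (hbpos : ∀ t ∈ Set.Icc (0:ℝ) T, 0 < b t)
    (hodew : ∀ t ∈ Set.Icc (0:ℝ) T,
      HasDerivAt w (R - a * w t - δ * w t * b t) t)
    (hodeb : ∀ t ∈ Set.Icc (0:ℝ) T,
      HasDerivAt b (ρ * b t * (1 - b t / w t) - μ * b t / (1 + θ₁ * b t + θ₂ * w t)) t) :
    (∀ t ∈ Set.Icc (0:ℝ) T, b t ≤ max b₀ (max w₀ (R / a))) ∧
    (∀ t ∈ Set.Icc (0:ℝ) T,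
      min w₀ (R / (a + δ * max b₀ (max w₀ (R / a)))) ≤ w t) ∧
    0 < min w₀ (R / (a + δ * max b₀ (max w₀ (R / a)))) := by
  set W := max w₀ (R / a)
  set M := max b₀ W
  have hWM : W ≤ M := le_max_right _ _
  have hRW : R ≤ a * W := (div_le_iff₀' ha).mp (le_max_right _ _)
  have hM : 0 < a + δ * M := by positivity
  have hw_le : ∀ t ∈ Icc (0:ℝ) T, w t ≤ W :=
    image_le_of_hasDerivAt_neg_above hodew (hw0 ▸ le_max_left _ _) fun x hx hWx => by
      have hx := Ico_subset_Icc_self hx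
      nlinarith [mul_pos (mul_pos hδ (hwpos x hx)) (hbpos x hx)]
  have hb_le : ∀ t ∈ Icc (0:ℝ) T, b t ≤ M :=
    image_le_of_hasDerivAt_neg_above hodeb (hb0 ▸ le_max_left _ _) fun x hx hMx => by
      have hx := Ico_subset_Icc_self hx
      have hw := hwpos x hx
      have hb := hbpos x hx
      have hlogistic : ρ * b x * (1 - b x / w x) < 0 :=
        mul_neg_of_pos_of_neg (by positivity)
          (sub_neg.mpr ((one_lt_div hw).mpr (by linarith [hw_le x hx])))
      have hdecay : 0 ≤ μ * b x / (1 + θ₁ * b x + θ₂ * w x) := by positivity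
      linarith
  have hRm : (a + δ * M) * (R / (a + δ * M)) = R := mul_div_cancel₀ _ hM.ne'
  refine ⟨hb_le, le_image_of_hasDerivAt_pos_below hodew (hw0 ▸ min_le_left _ _) ?_,
    lt_min hw₀ (div_pos hR hM)⟩
  intro x hx hxm
  have hx := Ico_subset_Icc_self hx
  have hw := hwpos x hx
  have hwR : w x < R / (a + δ * M) := hxm.trans_le (min_le_right _ _)
  nlinarith [mul_le_mul_of_nonneg_left (hb_le x hx) (mul_nonneg hδ.le hw.le),
    mul_lt_mul_of_pos_left hwR hM]

/-- With M_b := max{b₀, max{w₀, R/a}}, solutions of the planar system satisfy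
b(t) ≤ M_b and w(t) ≥ min{w₀, R/(a + δ M_b)} > 0 on their interval of existence. -/
theorem stmt_2 (R a δ ρ μ θ₁ θ₂ : ℝ)
    (hR : 0 < R) (ha : 0 < a) (hδ : 0 < δ) (hρ : 0 < ρ) (hμ : 0 < μ)
    (hθ₁ : 0 < θ₁) (hθ₂ : 0 < θ₂)
    (T : ℝ) (hT : 0 < T) (w b : ℝ → ℝ) (w₀ b₀ : ℝ)
    (hw₀ : 0 < w₀) (hb₀ : 0 < b₀) (hw0 : w 0 = w₀) (hb0 : b 0 = b₀)
    (hwpos : ∀ t ∈ Set.Icc (0:ℝ) T, 0 < w t)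
    (hbpos : ∀ t ∈ Set.Icc (0:ℝ) T, 0 < b t)
    (hodew : ∀ t ∈ Set.Icc (0:ℝ) T,
      HasDerivAt w (R - a * w t - δ * w t * b t) t)
    (hodeb : ∀ t ∈ Set.Icc (0:ℝ) T,
      HasDerivAt b (ρ * b t * (1 - b t / w t) - μ * b t / (1 + θ₁ * b t + θ₂ * w t)) t) :
    (∀ t ∈ Set.Icc (0:ℝ) T, b t ≤ max b₀ (max w₀ (R / a))) ∧
    (∀ t ∈ Set.Icc (0:ℝ) T,
      min w₀ (R / (a + δ * max b₀ (max w₀ (R / a)))) ≤ w t) ∧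
    0 < min w₀ (R / (a + δ * max b₀ (max w₀ (R / a)))) :=
  stmt_2_general R a δ ρ μ θ₁ θ₂ hR ha hδ hρ hμ hθ₁ hθ₂ T w b w₀ b₀ hw₀ hw0 hb0 hwpos hbpos hodew
    hodeb
end

section
/- At a positive equilibrium (w*, b*) (so w* = R/(a+δb*) and h(b*) = 0), the determinant of the Jacobian J(w*,b*) satisfies Det J = (ρδ²θ₁ b*(a + δb*) / (R[(1+θ₁b*)(a+δb*)+θ₂R])) · F'(b*); in particular sign(Det J) = sign(F'(b*)). -/
/-! Eliminate the equilibrium: `w* = R / (a + δ b*)`, and the equation `h(b*) = 0` solves for `μ`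
as `ρ (R - a b* - δ b*²) D / (R (a + δ b*))` with `D = (1 + θ₁ b*)(a + δ b*) + θ₂ R`. After these
substitutions `Det J` and `F'(b*)` are rational functions of the remaining parameters whose
ratio is the positive factor `ρ δ² θ₁ b* (a + δ b*) / (R D)`, so they have the same sign. -/

theorem Real.sign_mul_of_pos {c : ℝ} (hc : 0 < c) (x : ℝ) : Real.sign (c * x) = Real.sign x := by
  rcases lt_trichotomy x 0 with hx | rfl | hx
  · rw [Real.sign_of_neg hx, Real.sign_of_neg (mul_neg_of_pos_of_neg hc hx)]
  · rw [mul_zero]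
  · rw [Real.sign_of_pos hx, Real.sign_of_pos (mul_pos hc hx)]

section Equilibrium

variable {R a δ ρ μ θ₁ θ₂ w b : ℝ}

theorem mu_eq_of_equilibrium (hR : R ≠ 0) (hs : a + δ * b ≠ 0)
    (hD : (1 + θ₁ * b) * (a + δ * b) + θ₂ * R ≠ 0)
    (heq : (ρ / R) * (R - a * b - δ * b ^ 2) -
      μ * (a + δ * b) / ((1 + θ₁ * b) * (a + δ * b) + θ₂ * R) = 0) :
    μ = ρ * (R - a * b - δ * b ^ 2) * ((1 + θ₁ * b) * (a + δ * b) + θ₂ * R) /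
      (R * (a + δ * b)) := by
  rw [sub_eq_zero, eq_div_iff hD] at heq
  rw [eq_div_iff (mul_ne_zero hR hs)]
  field_simp at heq
  linear_combination -heq

theorem jacobian_det_eq_mul_deriv (hR : 0 < R) (ha : 0 < a) (hδ : 0 < δ) (hρ : 0 < ρ)
    (hθ₁ : 0 < θ₁) (hθ₂ : 0 < θ₂) (hb : 0 < b) (hw : w = R / (a + δ * b))
    (hμ : μ = ρ * (R - a * b - δ * b ^ 2) * ((1 + θ₁ * b) * (a + δ * b) + θ₂ * R) /
      (R * (a + δ * b))) :
    (-a - δ * b) * (μ * θ₁ * b / (1 + θ₁ * b + θ₂ * w) ^ 2 - ρ * b / w)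
        - (-δ * w) * (ρ * b ^ 2 / w ^ 2 + μ * θ₂ * b / (1 + θ₁ * b + θ₂ * w) ^ 2) =
      (ρ * δ ^ 2 * θ₁ * b * (a + δ * b) / (R * ((1 + θ₁ * b) * (a + δ * b) + θ₂ * R))) *
      (4 * b ^ 3 + 3 * ((2 * a * θ₁ + δ) / (δ * θ₁)) * b ^ 2 +
        2 * ((R * δ * θ₂ - R * δ * θ₁ + 2 * a * δ + θ₁ * a ^ 2) / (δ ^ 2 * θ₁)) * b +
        (ρ * (R * θ₂ * a - R * θ₁ * a + a ^ 2 - R * δ) + μ * R * δ) / (ρ * δ ^ 2 * θ₁)) := by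
  have hs : 0 < a + δ * b := by positivity
  subst hw hμ
  have hden : 1 + θ₁ * b + θ₂ * (R / (a + δ * b)) ≠ 0 := by positivity
  field_simp
  ring

end Equilibrium

theorem stmt_11_general (R a δ ρ μ θ₁ θ₂ : ℝ)
    (hR : 0 < R) (ha : 0 < a) (hδ : 0 < δ) (hρ : 0 < ρ)
    (hθ₁ : 0 < θ₁) (hθ₂ : 0 < θ₂)
    (w₁ b₁ : ℝ) (hb : 0 < b₁)
    (heqw : w₁ = R / (a + δ * b₁))
    (heqb : (ρ / R) * (R - a * b₁ - δ * b₁ ^ 2) -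
      μ * (a + δ * b₁) / ((1 + θ₁ * b₁) * (a + δ * b₁) + θ₂ * R) = 0)
    (F' : ℝ → ℝ)
    (hF' : ∀ x, F' x = 4 * x ^ 3 + 3 * ((2 * a * θ₁ + δ) / (δ * θ₁)) * x ^ 2 +
      2 * ((R * δ * θ₂ - R * δ * θ₁ + 2 * a * δ + θ₁ * a ^ 2) / (δ ^ 2 * θ₁)) * x +
      (ρ * (R * θ₂ * a - R * θ₁ * a + a ^ 2 - R * δ) + μ * R * δ) / (ρ * δ ^ 2 * θ₁))
    (detJ : ℝ)
    (hdet : detJ = (-a - δ * b₁) * (μ * θ₁ * b₁ / (1 + θ₁ * b₁ + θ₂ * w₁) ^ 2 - ρ * b₁ / w₁)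
      - (-δ * w₁) * (ρ * b₁ ^ 2 / w₁ ^ 2 + μ * θ₂ * b₁ / (1 + θ₁ * b₁ + θ₂ * w₁) ^ 2)) :
    detJ = (ρ * δ ^ 2 * θ₁ * b₁ * (a + δ * b₁) /
      (R * ((1 + θ₁ * b₁) * (a + δ * b₁) + θ₂ * R))) * F' b₁ ∧
    Real.sign detJ = Real.sign (F' b₁) := by
  have hμ := mu_eq_of_equilibrium hR.ne' (by positivity) (by positivity) heqb
  have hdetF : detJ = (ρ * δ ^ 2 * θ₁ * b₁ * (a + δ * b₁) /
      (R * ((1 + θ₁ * b₁) * (a + δ * b₁) + θ₂ * R))) * F' b₁ := by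
    rw [hdet, hF']
    exact jacobian_det_eq_mul_deriv hR ha hδ hρ hθ₁ hθ₂ hb heqw hμ
  refine ⟨hdetF, ?_⟩
  rw [hdetF, Real.sign_mul_of_pos (by positivity)]

/-- At a positive equilibrium, Det J = (ρδ²θ₁ b*(a+δb*)/(R[(1+θ₁b*)(a+δb*)+θ₂R]))·F'(b*),
and in particular sign(Det J) = sign(F'(b*)). -/
theorem stmt_11 (R a δ ρ μ θ₁ θ₂ : ℝ)
    (hR : 0 < R) (ha : 0 < a) (hδ : 0 < δ) (hρ : 0 < ρ) (hμ : 0 < μ)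
    (hθ₁ : 0 < θ₁) (hθ₂ : 0 < θ₂)
    (w₁ b₁ : ℝ) (hw : 0 < w₁) (hb : 0 < b₁)
    (heqw : w₁ = R / (a + δ * b₁))
    (heqb : (ρ / R) * (R - a * b₁ - δ * b₁ ^ 2) -
      μ * (a + δ * b₁) / ((1 + θ₁ * b₁) * (a + δ * b₁) + θ₂ * R) = 0)
    (F' : ℝ → ℝ)
    (hF' : ∀ x, F' x = 4 * x ^ 3 + 3 * ((2 * a * θ₁ + δ) / (δ * θ₁)) * x ^ 2 +
      2 * ((R * δ * θ₂ - R * δ * θ₁ + 2 * a * δ + θ₁ * a ^ 2) / (δ ^ 2 * θ₁)) * x +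
      (ρ * (R * θ₂ * a - R * θ₁ * a + a ^ 2 - R * δ) + μ * R * δ) / (ρ * δ ^ 2 * θ₁))
    (detJ : ℝ)
    (hdet : detJ = (-a - δ * b₁) * (μ * θ₁ * b₁ / (1 + θ₁ * b₁ + θ₂ * w₁) ^ 2 - ρ * b₁ / w₁)
      - (-δ * w₁) * (ρ * b₁ ^ 2 / w₁ ^ 2 + μ * θ₂ * b₁ / (1 + θ₁ * b₁ + θ₂ * w₁) ^ 2)) :
    detJ = (ρ * δ ^ 2 * θ₁ * b₁ * (a + δ * b₁) /
      (R * ((1 + θ₁ * b₁) * (a + δ * b₁) + θ₂ * R))) * F' b₁ ∧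
    Real.sign detJ = Real.sign (F' b₁) :=
  stmt_11_general R a δ ρ μ θ₁ θ₂ hR ha hδ hρ hθ₁ hθ₂ w₁ b₁ hb heqw heqb F' hF' detJ hdet
end

section
/- At a positive equilibrium (w*, b*), the trace of the Jacobian satisfies Tr J = -P(R,b*)·T(R,b*) where P(R,b*) = (a+δb*)/(R[(1+θ₁b*)(a+δb*)+θ₂R]) > 0 and T(R,b*) = θ₂R² + K₁R + K₀ with K₁ = δθ₁b*² + (aθ₁+δ+ρθ₂-ρθ₁)b* + a and K₀ = ρb*(a+δb*)(1+2θ₁b*). -/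
/-!
Write `D = a + δb*` and `E = (1 + θ₁b*)D + θ₂R`. The equilibrium gives `w* = R/D` and
`1 + θ₁b* + θ₂w* = E/D`, and the second equilibrium equation replaces `μ/(1 + θ₁b* + θ₂w*)` by
`ρ(1 - b*/w*)`. After these substitutions `Tr J` is `-D/(RE)` times a polynomial in `R`,
which expands to `θ₂R² + K₁R + K₀`.
-/

theorem equilibrium_trace_eq_neg_div_mul (R D E ρ θ b : ℝ) (hR : R ≠ 0) (hD : D ≠ 0) (hE : E ≠ 0) :
    -D + ρ * (1 - b / (R / D)) * θ * b / (E / D) - ρ * b / (R / D) =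
      -(D / (R * E)) * (R * E - ρ * θ * b * (R - b * D) + ρ * b * E) := by
  field_simp
  ring

theorem stmt_13_general (R a δ ρ μ θ₁ θ₂ : ℝ)
    (hR : 0 < R) (ha : 0 < a) (hδ : 0 < δ)
    (hθ₁ : 0 < θ₁) (hθ₂ : 0 < θ₂)
    (w₁ b₁ : ℝ) (hb : 0 < b₁)
    (heqw : w₁ = R / (a + δ * b₁))
    (heqb : ρ * (1 - b₁ / w₁) = μ / (1 + θ₁ * b₁ + θ₂ * w₁))
    (trJ P T K₁ K₀ : ℝ)
    (htr : trJ = -a - δ * b₁ + μ * θ₁ * b₁ / (1 + θ₁ * b₁ + θ₂ * w₁) ^ 2 - ρ * b₁ / w₁)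
    (hP : P = (a + δ * b₁) / (R * ((1 + θ₁ * b₁) * (a + δ * b₁) + θ₂ * R)))
    (hK₁ : K₁ = δ * θ₁ * b₁ ^ 2 + (a * θ₁ + δ + ρ * θ₂ - ρ * θ₁) * b₁ + a)
    (hK₀ : K₀ = ρ * b₁ * (a + δ * b₁) * (1 + 2 * θ₁ * b₁))
    (hT : T = θ₂ * R ^ 2 + K₁ * R + K₀) :
    trJ = -P * T ∧ 0 < P := by
  have hD : 0 < a + δ * b₁ := by positivity
  have hE : 0 < (1 + θ₁ * b₁) * (a + δ * b₁) + θ₂ * R := by positivity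
  have hS : 1 + θ₁ * b₁ + θ₂ * w₁ = ((1 + θ₁ * b₁) * (a + δ * b₁) + θ₂ * R) / (a + δ * b₁) := by
    rw [heqw]
    field_simp
  have hμ : μ * θ₁ * b₁ / (1 + θ₁ * b₁ + θ₂ * w₁) ^ 2 =
      ρ * (1 - b₁ / w₁) * θ₁ * b₁ / (1 + θ₁ * b₁ + θ₂ * w₁) := by
    rw [heqb, sq, ← div_div]
    ring
  refine ⟨?_, hP ▸ by positivity⟩
  rw [htr, hμ, hS, heqw, show -a - δ * b₁ = -(a + δ * b₁) by ring,
    equilibrium_trace_eq_neg_div_mul R _ _ ρ θ₁ b₁ hR.ne' hD.ne' hE.ne', hP, hT, hK₁, hK₀]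
  ring

/-- At a positive equilibrium, Tr J = -P(R,b*)·T(R,b*) with P > 0, where
T(R,b*) = θ₂R² + K₁R + K₀. -/
theorem stmt_13 (R a δ ρ μ θ₁ θ₂ : ℝ)
    (hR : 0 < R) (ha : 0 < a) (hδ : 0 < δ) (hρ : 0 < ρ) (hμ : 0 < μ)
    (hθ₁ : 0 < θ₁) (hθ₂ : 0 < θ₂)
    (w₁ b₁ : ℝ) (hw : 0 < w₁) (hb : 0 < b₁)
    (heqw : w₁ = R / (a + δ * b₁))
    (heqb : ρ * (1 - b₁ / w₁) = μ / (1 + θ₁ * b₁ + θ₂ * w₁))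
    (trJ P T K₁ K₀ : ℝ)
    (htr : trJ = -a - δ * b₁ + μ * θ₁ * b₁ / (1 + θ₁ * b₁ + θ₂ * w₁) ^ 2 - ρ * b₁ / w₁)
    (hP : P = (a + δ * b₁) / (R * ((1 + θ₁ * b₁) * (a + δ * b₁) + θ₂ * R)))
    (hK₁ : K₁ = δ * θ₁ * b₁ ^ 2 + (a * θ₁ + δ + ρ * θ₂ - ρ * θ₁) * b₁ + a)
    (hK₀ : K₀ = ρ * b₁ * (a + δ * b₁) * (1 + 2 * θ₁ * b₁))
    (hT : T = θ₂ * R ^ 2 + K₁ * R + K₀) :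
    trJ = -P * T ∧ 0 < P :=
  stmt_13_general R a δ ρ μ θ₁ θ₂ hR ha hδ hθ₁ hθ₂ w₁ b₁ hb heqw heqb trJ P T K₁ K₀ htr hP hK₁ hK₀
    hT
end

section
/- Let d₁(z) = l²(B₁z + B₂)/(z(d₂z - B₃)) with B₁ = d₂a₁₁ < 0, B₂ = (a₁₂a₂₁ - a₁₁a₂₂)l² < 0, B₃ = a₂₂l² > 0, defined for 0 < z < B₃/d₂. Then d₁(z) > 0 on this interval, d₁(z) → +∞ as z → 0⁺ and as z → (B₃/d₂)⁻, and d₁ attains its minimum at z* = (-d₂B₂ - √(d₂²B₂² + d₂B₁B₂B₃))/(d₂B₁), which lies in (0, B₃/d₂). -/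
/-!
With N(z) = c(B₁z + B₂) and D(z) = z(dz - B₃), both N and D are negative on (0, B₃/d), so
d₁ = N/D is positive there; D vanishes at both endpoints while N stays negative, which forces
d₁ → +∞. The point z* is the root in (0, B₃/d) of the numerator d B₁ z² + 2 d B₂ z - B₂ B₃ of
(N/D)', and for this root N(z)D(z*) - N(z*)D(z) = -N(z*) d (z - z*)² ≥ 0, which is minimality.
-/

open Filter Set Topology

noncomputable def critDiffusion (c B₁ B₂ B₃ d z : ℝ) : ℝ :=
  c * (B₁ * z + B₂) / (z * (d * z - B₃))

noncomputable def critPoint (B₁ B₂ B₃ d : ℝ) : ℝ :=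
  (-(d * B₂) - √(d ^ 2 * B₂ ^ 2 + d * B₁ * B₂ * B₃)) / (d * B₁)

theorem Filter.Tendsto.div_atTop_of_neg_of_nhdsLT_zero {α : Type*} {l : Filter α}
    {f g : α → ℝ} {C : ℝ} (hC : C < 0) (hf : Tendsto f l (𝓝 C)) (hg : Tendsto g l (𝓝[<] 0)) :
    Tendsto (fun x => f x / g x) l atTop := by
  simpa only [div_eq_mul_inv, Pi.inv_apply] using hf.neg_mul_atBot hC hg.inv_tendsto_nhdsLT_zero

section

variable {c B₁ B₂ B₃ d : ℝ}

theorem mul_sub_neg_of_mem_Ioo (hd : 0 < d) {z : ℝ} (hz : z ∈ Ioo 0 (B₃ / d)) :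
    z * (d * z - B₃) < 0 := by
  have : d * z < B₃ := (lt_div_iff₀' hd).mp hz.2
  exact mul_neg_of_pos_of_neg hz.1 (by linarith)

theorem critDiffusion_pos (hc : 0 < c) (hB₁ : B₁ ≤ 0) (hB₂ : B₂ < 0) (hd : 0 < d) {z : ℝ}
    (hz : z ∈ Ioo 0 (B₃ / d)) : 0 < critDiffusion c B₁ B₂ B₃ d z := by
  have hN : B₁ * z + B₂ < 0 := by nlinarith [hz.1]
  exact div_pos_of_neg_of_neg (mul_neg_of_pos_of_neg hc hN) (mul_sub_neg_of_mem_Ioo hd hz)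

theorem tendsto_critDiffusion_atTop {F : Filter ℝ} {a : ℝ} (hc : 0 < c) (hd : 0 < d)
    (hFa : F ≤ 𝓝 a) (hF : Ioo 0 (B₃ / d) ∈ F) (hDa : a * (d * a - B₃) = 0)
    (hNa : B₁ * a + B₂ < 0) : Tendsto (critDiffusion c B₁ B₂ B₃ d) F atTop := by
  have hN : Tendsto (fun z => c * (B₁ * z + B₂)) F (𝓝 (c * (B₁ * a + B₂))) :=
    ((by fun_prop : Continuous fun z => c * (B₁ * z + B₂)).tendsto a).mono_left hFa
  have hD : Tendsto (fun z => z * (d * z - B₃)) F (𝓝[<] 0) := by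
    refine tendsto_nhdsWithin_iff.mpr ⟨?_, mem_of_superset hF fun z hz => ?_⟩
    · simpa only [hDa] using
        ((by fun_prop : Continuous fun z => z * (d * z - B₃)).tendsto a).mono_left hFa
    · exact mul_sub_neg_of_mem_Ioo hd hz
  exact hN.div_atTop_of_neg_of_nhdsLT_zero (mul_neg_of_pos_of_neg hc hNa) hD

theorem critPoint_discr_pos (hB₁ : B₁ < 0) (hB₂ : B₂ < 0) (hB₃ : 0 < B₃) (hd : 0 < d) :
    0 < d ^ 2 * B₂ ^ 2 + d * B₁ * B₂ * B₃ := by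
  have : 0 < d * (B₁ * B₂) * B₃ := mul_pos (mul_pos hd (mul_pos_of_neg_of_neg hB₁ hB₂)) hB₃
  nlinarith [sq_nonneg (d * B₂)]

theorem critPoint_mem_Ioo (hB₁ : B₁ < 0) (hB₂ : B₂ < 0) (hB₃ : 0 < B₃) (hd : 0 < d) :
    critPoint B₁ B₂ B₃ d ∈ Ioo 0 (B₃ / d) := by
  have hdB₁ : d * B₁ < 0 := mul_neg_of_pos_of_neg hd hB₁
  have hdB₂ : 0 < -(d * B₂) := neg_pos.mpr (mul_neg_of_pos_of_neg hd hB₂)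
  have hB₁B₃ : 0 < -(B₁ * B₃) := neg_pos.mpr (mul_neg_of_neg_of_pos hB₁ hB₃)
  have hdB₁B₂B₃ : 0 < d * (B₁ * B₂) * B₃ :=
    mul_pos (mul_pos hd (mul_pos_of_neg_of_neg hB₁ hB₂)) hB₃
  have hs_gt : -(d * B₂) < √(d ^ 2 * B₂ ^ 2 + d * B₁ * B₂ * B₃) :=
    (Real.lt_sqrt hdB₂.le).mpr (by linarith)
  have hs_lt : √(d ^ 2 * B₂ ^ 2 + d * B₁ * B₂ * B₃) < -(d * B₂) - B₁ * B₃ :=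
    (Real.sqrt_lt' (by linarith)).mpr (by nlinarith)
  refine ⟨div_pos_of_neg_of_neg (by linarith) hdB₁, ?_⟩
  rw [critPoint, div_lt_iff_of_neg hdB₁, show B₃ / d * (d * B₁) = B₃ * B₁ by field_simp]
  linarith

theorem critPoint_quadratic (hdisc : 0 ≤ d ^ 2 * B₂ ^ 2 + d * B₁ * B₂ * B₃) (hdB₁ : d * B₁ ≠ 0) :
    d * B₁ * critPoint B₁ B₂ B₃ d ^ 2 + 2 * d * B₂ * critPoint B₁ B₂ B₃ d - B₂ * B₃ = 0 := by
  have hs := Real.sq_sqrt hdisc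
  have hz : critPoint B₁ B₂ B₃ d * (d * B₁) = -(d * B₂) - √(d ^ 2 * B₂ ^ 2 + d * B₁ * B₂ * B₃) :=
    div_mul_cancel₀ _ hdB₁
  apply mul_left_cancel₀ hdB₁
  linear_combination (critPoint B₁ B₂ B₃ d * (d * B₁) - √(d ^ 2 * B₂ ^ 2 + d * B₁ * B₂ * B₃)
    + d * B₂) * hz + hs

theorem isMinOn_critDiffusion (hc : 0 ≤ c) (hd : 0 < d) {z₀ : ℝ} (hz₀ : z₀ ∈ Ioo 0 (B₃ / d))
    (hN : B₁ * z₀ + B₂ ≤ 0) (hq : d * B₁ * z₀ ^ 2 + 2 * d * B₂ * z₀ - B₂ * B₃ = 0) :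
    IsMinOn (critDiffusion c B₁ B₂ B₃ d) (Ioo 0 (B₃ / d)) z₀ := by
  refine isMinOn_iff.mpr fun z hz => ?_
  have hD := mul_sub_neg_of_mem_Ioo hd hz
  have hD₀ := mul_sub_neg_of_mem_Ioo hd hz₀
  have key : c * (B₁ * z + B₂) * (z₀ * (d * z₀ - B₃)) - z * (d * z - B₃) * (c * (B₁ * z₀ + B₂))
      = c * d * (z - z₀) ^ 2 * -(B₁ * z₀ + B₂) := by
    linear_combination (c * (z₀ - z)) * hq
  have hkey : 0 ≤ c * d * (z - z₀) ^ 2 * -(B₁ * z₀ + B₂) :=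
    mul_nonneg (mul_nonneg (mul_nonneg hc hd.le) (sq_nonneg _)) (neg_nonneg.mpr hN)
  rw [← sub_nonneg, critDiffusion, critDiffusion, div_sub_div _ _ hD.ne hD₀.ne, key]
  exact div_nonneg hkey (mul_pos_of_neg_of_neg hD hD₀).le

end

/-- On (0, B₃/d₂), the critical diffusion curve d₁(z) = l²(B₁z+B₂)/(z(d₂z-B₃)) is
positive, blows up at both endpoints, and attains its minimum at
z* = (-d₂B₂ - √(d₂²B₂² + d₂B₁B₂B₃))/(d₂B₁) ∈ (0, B₃/d₂). -/
theorem stmt_17 (d₂ l a₁₁ a₁₂ a₂₁ a₂₂ : ℝ)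
    (hd₂ : 0 < d₂) (hl : 0 < l) (ha₁₁ : a₁₁ < 0) (ha₂₂ : 0 < a₂₂)
    (hdet : 0 < a₁₁ * a₂₂ - a₁₂ * a₂₁)
    (B₁ B₂ B₃ : ℝ)
    (hB₁ : B₁ = d₂ * a₁₁) (hB₂ : B₂ = (a₁₂ * a₂₁ - a₁₁ * a₂₂) * l ^ 2)
    (hB₃ : B₃ = a₂₂ * l ^ 2)
    (d₁f : ℝ → ℝ)
    (hd₁f : ∀ z, d₁f z = l ^ 2 * (B₁ * z + B₂) / (z * (d₂ * z - B₃)))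
    (zstar : ℝ)
    (hz : zstar = (-(d₂ * B₂) - Real.sqrt (d₂ ^ 2 * B₂ ^ 2 + d₂ * B₁ * B₂ * B₃)) / (d₂ * B₁)) :
    (∀ z ∈ Set.Ioo (0 : ℝ) (B₃ / d₂), 0 < d₁f z) ∧
    Filter.Tendsto d₁f (nhdsWithin 0 (Set.Ioi 0)) Filter.atTop ∧
    Filter.Tendsto d₁f (nhdsWithin (B₃ / d₂) (Set.Iio (B₃ / d₂))) Filter.atTop ∧
    zstar ∈ Set.Ioo (0 : ℝ) (B₃ / d₂) ∧
    (∀ z ∈ Set.Ioo (0 : ℝ) (B₃ / d₂), d₁f zstar ≤ d₁f z) := by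
  have hB₁n : B₁ < 0 := hB₁ ▸ mul_neg_of_pos_of_neg hd₂ ha₁₁
  have hB₂n : B₂ < 0 := hB₂ ▸ mul_neg_of_neg_of_pos (by linarith) (by positivity)
  have hB₃p : 0 < B₃ := hB₃ ▸ by positivity
  have hc : 0 < l ^ 2 := by positivity
  have hend : 0 < B₃ / d₂ := div_pos hB₃p hd₂
  obtain rfl : d₁f = critDiffusion (l ^ 2) B₁ B₂ B₃ d₂ := funext hd₁f
  obtain rfl : zstar = critPoint B₁ B₂ B₃ d₂ := hz
  have hmem := critPoint_mem_Ioo hB₁n hB₂n hB₃p hd₂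
  have hq := critPoint_quadratic (critPoint_discr_pos hB₁n hB₂n hB₃p hd₂).le
    (mul_neg_of_pos_of_neg hd₂ hB₁n).ne
  refine ⟨fun z hz => critDiffusion_pos hc hB₁n.le hB₂n hd₂ hz, ?_, ?_, hmem,
    isMinOn_iff.mp (isMinOn_critDiffusion hc.le hd₂ hmem (by nlinarith [hmem.1]) hq)⟩
  · exact tendsto_critDiffusion_atTop hc hd₂ nhdsWithin_le_nhds (Ioo_mem_nhdsGT hend)
      (by ring) (by simpa using hB₂n)
  · exact tendsto_critDiffusion_atTop hc hd₂ nhdsWithin_le_nhds (Ioo_mem_nhdsLT hend)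
      (by field_simp; ring) (by nlinarith)
end

section
/- With the same notation and z > B₃/d₂, the function d₁(z) = l²(B₁z + B₂)/(z(d₂z - B₃)) is negative, strictly increasing, and tends to 0 as z → +∞; consequently for any d₁ > 0 and z > B₃/d₂, J = d₁d₂z²/l⁴ - (d₁a₂₂ + d₂a₁₁)z/l² + (a₁₁a₂₂ - a₁₂a₂₁) > 0. -/
/-! The critical diffusion d₁(z) is a ratio with negative numerator `l²(B₁z + B₂)` and positive
denominator `z(d₂z - B₃)` on `z > B₃/d₂`; cross-multiplying, `d₁(x) < d₁(y)` for `x < y` reduces to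
`(y - x)(B₁d₂xy + B₂(d₂x + d₂y - B₃)) < 0`, and the limit holds because the degree of the numerator
is smaller. Finally `J = z(d₂z - B₃)/l⁴ · (d₁ - d₁(z))`, which is positive as soon as `d₁ > 0 > d₁(z)`. -/

open Filter Topology

noncomputable def criticalDiffusion (k B₁ B₂ B₃ d₂ z : ℝ) : ℝ :=
  k * (B₁ * z + B₂) / (z * (d₂ * z - B₃))

section

variable {k B₁ B₂ B₃ d₂ : ℝ}

lemma pos_of_div_lt (hB₃ : 0 ≤ B₃) (hd₂ : 0 < d₂) {z : ℝ} (hz : B₃ / d₂ < z) : 0 < z :=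
  (div_nonneg hB₃ hd₂.le).trans_lt hz

lemma sub_pos_of_div_lt (hd₂ : 0 < d₂) {z : ℝ} (hz : B₃ / d₂ < z) : 0 < d₂ * z - B₃ :=
  sub_pos.mpr ((div_lt_iff₀' hd₂).mp hz)

lemma criticalDiffusion_neg (hk : 0 < k) (hB₁ : B₁ ≤ 0) (hB₂ : B₂ < 0) (hB₃ : 0 ≤ B₃)
    (hd₂ : 0 < d₂) {z : ℝ} (hz : B₃ / d₂ < z) : criticalDiffusion k B₁ B₂ B₃ d₂ z < 0 := by
  have hz₀ := pos_of_div_lt hB₃ hd₂ hz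
  have hnum : B₁ * z + B₂ < 0 := by nlinarith
  exact div_neg_of_neg_of_pos (mul_neg_of_pos_of_neg hk hnum)
    (mul_pos hz₀ (sub_pos_of_div_lt hd₂ hz))

lemma strictMonoOn_criticalDiffusion (hk : 0 < k) (hB₁ : B₁ ≤ 0) (hB₂ : B₂ < 0) (hB₃ : 0 ≤ B₃)
    (hd₂ : 0 < d₂) : StrictMonoOn (criticalDiffusion k B₁ B₂ B₃ d₂) (Set.Ioi (B₃ / d₂)) := by
  intro x (hx : B₃ / d₂ < x) y (hy : B₃ / d₂ < y) hxy
  have hx₀ := pos_of_div_lt hB₃ hd₂ hx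
  have hy₀ := pos_of_div_lt hB₃ hd₂ hy
  have hxd := sub_pos_of_div_lt hd₂ hx
  have hyd := sub_pos_of_div_lt hd₂ hy
  have hbracket : B₁ * (d₂ * x * y) + B₂ * (d₂ * x + d₂ * y - B₃) < 0 := by
    have h₁ : B₁ * (d₂ * x * y) ≤ 0 := mul_nonpos_of_nonpos_of_nonneg hB₁ (by positivity)
    have h₂ : B₂ * (d₂ * x + d₂ * y - B₃) < 0 := mul_neg_of_neg_of_pos hB₂ (by nlinarith)
    linarith
  unfold criticalDiffusion
  rw [div_lt_div_iff₀ (mul_pos hx₀ hxd) (mul_pos hy₀ hyd)]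
  nlinarith [mul_pos (mul_pos hk (sub_pos.mpr hxy)) (neg_pos.mpr hbracket)]

lemma tendsto_criticalDiffusion_atTop (hd₂ : 0 < d₂) :
    Tendsto (criticalDiffusion k B₁ B₂ B₃ d₂) atTop (𝓝 0) := by
  have hnum : Tendsto (fun z : ℝ => k * (B₁ + B₂ * z⁻¹)) atTop (𝓝 (k * (B₁ + B₂ * 0))) :=
    tendsto_const_nhds.mul (tendsto_const_nhds.add (tendsto_const_nhds.mul tendsto_inv_atTop_zero))
  have hden : Tendsto (fun z : ℝ => d₂ * z - B₃) atTop atTop :=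
    tendsto_atTop_add_const_right _ _ (tendsto_id.const_mul_atTop hd₂)
  refine (hnum.div_atTop hden).congr' ?_
  filter_upwards [eventually_gt_atTop 0] with z hz
  unfold criticalDiffusion
  field_simp

end

/-- The left-hand side is `det (A - (z / l²) • diag d₁ d₂)` for the reaction matrix `A = (aᵢⱼ)`. -/
lemma det_eq_mul_sub_criticalDiffusion (d₁ d₂ l a₁₁ a₁₂ a₂₁ a₂₂ z : ℝ) (hl : l ≠ 0) (hz : z ≠ 0)
    (hzd : d₂ * z - a₂₂ * l ^ 2 ≠ 0) :
    d₁ * d₂ * z ^ 2 / l ^ 4 - (d₁ * a₂₂ + d₂ * a₁₁) * z / l ^ 2 + (a₁₁ * a₂₂ - a₁₂ * a₂₁) =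
      z * (d₂ * z - a₂₂ * l ^ 2) / l ^ 4 * (d₁ - criticalDiffusion (l ^ 2) (d₂ * a₁₁)
        ((a₁₂ * a₂₁ - a₁₁ * a₂₂) * l ^ 2) (a₂₂ * l ^ 2) d₂ z) := by
  unfold criticalDiffusion
  generalize hw : d₂ * z - a₂₂ * l ^ 2 = w at hzd ⊢
  field_simp
  rw [← hw]
  ring

/-- For z > B₃/d₂, d₁(z) = l²(B₁z+B₂)/(z(d₂z-B₃)) is negative, strictly increasing,
and tends to 0 at infinity; hence J > 0 there for any d₁ > 0. -/
theorem stmt_18 (d₂ l a₁₁ a₁₂ a₂₁ a₂₂ : ℝ)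
    (hd₂ : 0 < d₂) (hl : 0 < l) (ha₁₁ : a₁₁ < 0) (ha₂₂ : 0 < a₂₂)
    (hdet : 0 < a₁₁ * a₂₂ - a₁₂ * a₂₁)
    (B₁ B₂ B₃ : ℝ)
    (hB₁ : B₁ = d₂ * a₁₁) (hB₂ : B₂ = (a₁₂ * a₂₁ - a₁₁ * a₂₂) * l ^ 2)
    (hB₃ : B₃ = a₂₂ * l ^ 2)
    (d₁f : ℝ → ℝ)
    (hd₁f : ∀ z, d₁f z = l ^ 2 * (B₁ * z + B₂) / (z * (d₂ * z - B₃))) :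
    (∀ z, B₃ / d₂ < z → d₁f z < 0) ∧
    StrictMonoOn d₁f (Set.Ioi (B₃ / d₂)) ∧
    Filter.Tendsto d₁f Filter.atTop (nhds 0) ∧
    (∀ d₁ : ℝ, 0 < d₁ → ∀ z, B₃ / d₂ < z →
      0 < d₁ * d₂ * z ^ 2 / l ^ 4 - (d₁ * a₂₂ + d₂ * a₁₁) * z / l ^ 2 +
        (a₁₁ * a₂₂ - a₁₂ * a₂₁)) := by
  obtain rfl : d₁f = criticalDiffusion (l ^ 2) B₁ B₂ B₃ d₂ := funext hd₁f
  subst hB₁ hB₂ hB₃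
  have hk : 0 < l ^ 2 := by positivity
  have hB₁ : d₂ * a₁₁ ≤ 0 := mul_nonpos_of_nonneg_of_nonpos hd₂.le ha₁₁.le
  have hB₂ : (a₁₂ * a₂₁ - a₁₁ * a₂₂) * l ^ 2 < 0 := mul_neg_of_neg_of_pos (by linarith) hk
  have hB₃ : 0 ≤ a₂₂ * l ^ 2 := by positivity
  have hneg z (hz : a₂₂ * l ^ 2 / d₂ < z) := criticalDiffusion_neg hk hB₁ hB₂ hB₃ hd₂ hz
  refine ⟨hneg, strictMonoOn_criticalDiffusion hk hB₁ hB₂ hB₃ hd₂,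
    tendsto_criticalDiffusion_atTop hd₂, fun d₁ hd₁ z hz => ?_⟩
  have hz₀ := pos_of_div_lt hB₃ hd₂ hz
  have hzd := sub_pos_of_div_lt hd₂ hz
  rw [det_eq_mul_sub_criticalDiffusion d₁ d₂ l a₁₁ a₁₂ a₂₁ a₂₂ z hl.ne' hz₀.ne' hzd.ne']
  exact mul_pos (by positivity) (sub_pos.mpr ((hneg z hz).trans hd₁))
end

section
/- At the bare-soil state (R/a, 0) of the reaction–diffusion system, if θ₂ < a(μ-ρ)/(ρR) (with μ > ρ), then for every mode k ≥ 0, T_k = -(d₁+d₂)k²/l² - a + ρ - μa/(a+θ₂R) < 0 and J_k = d₁d₂k⁴/l⁴ - [d₁(ρ - μa/(a+θ₂R)) - d₂a]k²/l² - a(ρ - μa/(a+θ₂R)) > 0; hence the bare-soil state is linearly stable to all spatial perturbations. -/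
/-! With `c := ρ - μa/(a + θ₂R)` and `x := k²/l² ≥ 0`, the trace and determinant of the
linearisation at the bare-soil state are `T = -(d₁+d₂)x - a + c` and
`J = d₁d₂x² - (d₁c - d₂a)x - ac`. The threshold on `θ₂` is exactly `c < 0`, and then every
term of `-T` and of `J` is nonnegative, with `a - c > 0` and `-ac > 0` strict. -/

theorem sub_div_neg_of_lt_div {R a ρ μ θ : ℝ} (hR : 0 < R) (ha : 0 < a) (hρ : 0 < ρ)
    (hθ : 0 < θ) (hcond : θ < a * (μ - ρ) / (ρ * R)) :
    ρ - μ * a / (a + θ * R) < 0 := by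
  have hden : 0 < a + θ * R := by positivity
  have hcond' : θ * (ρ * R) < a * (μ - ρ) := (lt_div_iff₀ (by positivity)).mp hcond
  rw [sub_neg, lt_div_iff₀ hden]
  linarith

theorem trace_neg_of_growth_neg {a c d₁ d₂ x : ℝ} (ha : 0 < a) (hc : c < 0)
    (hd₁ : 0 ≤ d₁) (hd₂ : 0 ≤ d₂) (hx : 0 ≤ x) :
    -(d₁ + d₂) * x - a + c < 0 := by
  nlinarith

theorem det_pos_of_growth_neg {a c d₁ d₂ x : ℝ} (ha : 0 < a) (hc : c < 0)
    (hd₁ : 0 ≤ d₁) (hd₂ : 0 ≤ d₂) (hx : 0 ≤ x) :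
    0 < d₁ * d₂ * x ^ 2 - (d₁ * c - d₂ * a) * x - a * c := by
  have hquad : 0 ≤ d₁ * d₂ * x ^ 2 := by positivity
  have hlin : 0 ≤ (d₂ * a - d₁ * c) * x := mul_nonneg (by nlinarith) hx
  nlinarith

theorem stmt_19_general (R a ρ μ θ₂ d₁ d₂ l : ℝ)
    (hR : 0 < R) (ha : 0 < a) (hρ : 0 < ρ)
    (hθ₂ : 0 < θ₂) (hd₁ : 0 < d₁) (hd₂ : 0 < d₂)
    (hcond : θ₂ < a * (μ - ρ) / (ρ * R)) :
    ∀ k : ℕ,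
      -(d₁ + d₂) * (k : ℝ) ^ 2 / l ^ 2 - a + ρ - μ * a / (a + θ₂ * R) < 0 ∧
      0 < d₁ * d₂ * (k : ℝ) ^ 4 / l ^ 4 -
        (d₁ * (ρ - μ * a / (a + θ₂ * R)) - d₂ * a) * (k : ℝ) ^ 2 / l ^ 2 -
        a * (ρ - μ * a / (a + θ₂ * R)) := by
  intro k
  have hc := sub_div_neg_of_lt_div hR ha hρ hθ₂ hcond
  have hx : (0 : ℝ) ≤ (k : ℝ) ^ 2 / l ^ 2 := by positivity
  constructor
  · convert trace_neg_of_growth_neg ha hc hd₁.le hd₂.le hx using 1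
    ring
  · convert det_pos_of_growth_neg ha hc hd₁.le hd₂.le hx using 1
    ring

/-- At the bare-soil state, if θ₂ < a(μ-ρ)/(ρR) then every mode k has T_k < 0 and
J_k > 0: the bare-soil state is linearly stable to all spatial perturbations. -/
theorem stmt_19 (R a δ ρ μ θ₁ θ₂ d₁ d₂ l : ℝ)
    (hR : 0 < R) (ha : 0 < a) (hδ : 0 < δ) (hρ : 0 < ρ) (hμ : 0 < μ)
    (hθ₁ : 0 < θ₁) (hθ₂ : 0 < θ₂) (hd₁ : 0 < d₁) (hd₂ : 0 < d₂) (hl : 0 < l)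
    (hμρ : ρ < μ) (hcond : θ₂ < a * (μ - ρ) / (ρ * R)) :
    ∀ k : ℕ,
      -(d₁ + d₂) * (k : ℝ) ^ 2 / l ^ 2 - a + ρ - μ * a / (a + θ₂ * R) < 0 ∧
      0 < d₁ * d₂ * (k : ℝ) ^ 4 / l ^ 4 -
        (d₁ * (ρ - μ * a / (a + θ₂ * R)) - d₂ * a) * (k : ℝ) ^ 2 / l ^ 2 -
        a * (ρ - μ * a / (a + θ₂ * R)) :=
  stmt_19_general R a ρ μ θ₂ d₁ d₂ l hR ha hρ hθ₂ hd₁ hd₂ hcond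
end
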